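/- Lemma 8.2: Let X be a δ-hyperbolic geodesic metric space, h a hyperbolic isometry of X, x₀ ∈ X the basepoint used for Gromov products, xⱼ = hʲ(x₀), and L₁ an invariant axis for h through the points xⱼ. Fix ε > d(x₀,x₁). Then there is a constant K, not depending on y or z (K depends only on δ, ε, and a stability constant R for the quasi-geodesic L₁), such that: whenever y, z ∈ X, m, n > 0, xₘ ∈ proj_{L₁(ℝ)}^ε(y), and xₙ ∈ proj_{L₁(ℝ)}^ε(z), one has both (y·z) ≥ min{|xₙ|, |xₘ|} − K and |(y·xₙ) − min{|xₙ|, |xₘ|}| ≤ K, where |w| = d(x₀,w). -/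
import Mathlib


/-- `γ` is a geodesic segment from `u` to `v`: an isometric embedding of
`[0, dist u v]` sending the endpoints to `u` and `v`. -/
def IsGeodesicSegment {X : Type*} [MetricSpace X] (γ : ℝ → X) (u v : X) : Prop :=
  γ 0 = u ∧ γ (dist u v) = v ∧
    ∀ s ∈ Set.Icc (0 : ℝ) (dist u v), ∀ t ∈ Set.Icc (0 : ℝ) (dist u v),
      dist (γ s) (γ t) = |s - t|

/-- A metric space is geodesic if every pair of points is joined by a geodesic. -/
def GeodesicSpace (X : Type*) [MetricSpace X] : Prop :=
  ∀ u v : X, ∃ γ : ℝ → X, IsGeodesicSegment γ u v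

/-- `X` is `δ`-hyperbolic: every geodesic triangle is `δ`-thin, i.e. each side is
contained in the closed `δ`-neighborhood of the union of the other two sides. -/
def DeltaHyperbolic (X : Type*) [MetricSpace X] (δ : ℝ) : Prop :=
  ∀ (x y z : X) (γ₁ γ₂ γ₃ : ℝ → X),
    IsGeodesicSegment γ₁ x y → IsGeodesicSegment γ₂ y z → IsGeodesicSegment γ₃ x z →
    ∀ p ∈ γ₃ '' Set.Icc (0 : ℝ) (dist x z),
      ∃ q ∈ (γ₁ '' Set.Icc (0 : ℝ) (dist x y)) ∪ (γ₂ '' Set.Icc (0 : ℝ) (dist y z)),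
        dist p q ≤ δ

/-- `U` is quasi-convex with constant `R`: every geodesic segment between points of `U`
lies in the closed `R`-neighborhood of `U`. -/
def QuasiConvexWith {X : Type*} [MetricSpace X] (U : Set X) (R : ℝ) : Prop :=
  ∀ u ∈ U, ∀ v ∈ U, ∀ γ : ℝ → X, IsGeodesicSegment γ u v →
    ∀ p ∈ γ '' Set.Icc (0 : ℝ) (dist u v), ∃ w ∈ U, dist p w ≤ R

/-- The quasi-projection of `y` to `U`: the points of `U` which are, within an error
of `ε`, closest to `y`. -/
noncomputable def quasiProj {X : Type*} [MetricSpace X] (U : Set X) (ε : ℝ) (y : X) :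
    Set X :=
  {y' ∈ U | dist y y' ≤ Metric.infDist y U + ε}

/-- The average displacement of the isometry `h`, computed at the point `x`:
`inf_{n ≥ 1} dist x (hⁿ x) / n` (this equals `lim_n dist x (hⁿ x) / n` and is
independent of `x`). -/
noncomputable def avgDisp {X : Type*} [MetricSpace X] (h : X ≃ᵢ X) (x : X) : ℝ :=
  ⨅ n : ℕ+, dist x ((⇑h)^[(n : ℕ)] x) / (n : ℝ)

/-- `L` is an invariant axis for `h` through the orbit of `x`, built from the geodesic
segment `γ` from `x` to `h x`:  `L t = hᵏ (γ (t - k·d₁))` for `t ∈ [k·d₁, (k+1)·d₁]`,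
where `d₁ = dist x (h x)`. -/
def IsInvariantAxis {X : Type*} [MetricSpace X] (h : X ≃ᵢ X) (x : X) (γ : ℝ → X)
    (L : ℝ → X) : Prop :=
  IsGeodesicSegment γ x (h x) ∧
    ∀ k : ℤ, ∀ t ∈ Set.Icc ((k : ℝ) * dist x (h x)) (((k : ℝ) + 1) * dist x (h x)),
      L t = (h ^ k) (γ (t - (k : ℝ) * dist x (h x)))

/-- The Gromov product of `y` and `z` with respect to the basepoint `x₀`. -/
noncomputable def gromovProd {X : Type*} [MetricSpace X] (x₀ y z : X) : ℝ :=
  (dist x₀ y + dist x₀ z - dist y z) / 2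

lemma gs_rev {X : Type*} [MetricSpace X] {γ : ℝ → X} {u v : X}
    (hg : IsGeodesicSegment γ u v) :
    IsGeodesicSegment (fun t => γ (dist u v - t)) v u := by
  obtain ⟨h0, hD, hd⟩ := hg
  rw [IsGeodesicSegment, dist_comm v u]
  refine ⟨by simpa using hD, by simpa using h0, ?_⟩
  intro s hs t ht
  have h1 : dist u v - s ∈ Set.Icc (0:ℝ) (dist u v) := ⟨by linarith [hs.2], by linarith [hs.1]⟩
  have h2 : dist u v - t ∈ Set.Icc (0:ℝ) (dist u v) := ⟨by linarith [ht.2], by linarith [ht.1]⟩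
  rw [hd _ h1 _ h2, abs_sub_comm]
  congr 1; ring

lemma gs_cont {X : Type*} [MetricSpace X] {γ : ℝ → X} {u v : X}
    (hg : IsGeodesicSegment γ u v) :
    ContinuousOn γ (Set.Icc (0:ℝ) (dist u v)) := by
  have : LipschitzOnWith 1 γ (Set.Icc (0:ℝ) (dist u v)) := by
    rw [lipschitzOnWith_iff_dist_le_mul]
    intro s hs t ht
    rw [hg.2.2 s hs t ht]
    simp [Real.dist_eq]
  exact this.continuousOn

section
variable {X : Type*} [MetricSpace X] (h : X ≃ᵢ X) (x₀ : X) (γ L : ℝ → X)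

lemma axis_same_interval (hL : IsInvariantAxis h x₀ γ L) (k : ℤ)
    {s t : ℝ} (hs : s ∈ Set.Icc ((k:ℝ) * dist x₀ (h x₀)) (((k:ℝ)+1) * dist x₀ (h x₀)))
    (ht : t ∈ Set.Icc ((k:ℝ) * dist x₀ (h x₀)) (((k:ℝ)+1) * dist x₀ (h x₀))) :
    dist (L s) (L t) = |s - t| := by
  set d := dist x₀ (h x₀) with hd
  rw [hL.2 k s hs, hL.2 k t ht, (h ^ k).dist_eq]
  have h1 : s - (k:ℝ)*d ∈ Set.Icc (0:ℝ) (dist x₀ (h x₀)) := by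
    constructor
    · linarith [hs.1]
    · have := hs.2; rw [← hd]; nlinarith [hs.2]
  have h2 : t - (k:ℝ)*d ∈ Set.Icc (0:ℝ) (dist x₀ (h x₀)) := by
    constructor
    · linarith [ht.1]
    · rw [← hd]; nlinarith [ht.2]
  rw [hL.1.2.2 _ h1 _ h2]
  congr 1; ring

lemma axis_lipschitz (hL : IsInvariantAxis h x₀ γ L) (hd : 0 < dist x₀ (h x₀)) :
    ∀ s t : ℝ, dist (L s) (L t) ≤ |s - t| := by
  set d := dist x₀ (h x₀) with hdd
  have main : ∀ N : ℕ, ∀ s t : ℝ, s ≤ t → ⌊t/d⌋ - ⌊s/d⌋ = (N : ℤ) →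
      dist (L s) (L t) ≤ t - s := by
    intro N
    induction N with
    | zero =>
      intro s t hst hfl
      have hk : ⌊s/d⌋ = ⌊t/d⌋ := by omega
      set k := ⌊s/d⌋ with hkdef
      have hs1 : (k:ℝ) * d ≤ s := by
        have := Int.floor_le (s/d)
        calc (k:ℝ) * d ≤ (s/d) * d := by nlinarith
        _ = s := by field_simp
      have hs2 : s ≤ ((k:ℝ)+1) * d := by
        have := Int.lt_floor_add_one (s/d)
        have : s/d * d ≤ ((k:ℝ)+1) * d := by push_cast at this ⊢; nlinarith
        calc s = s/d*d := by field_simp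
        _ ≤ _ := this
      have ht1 : (k:ℝ) * d ≤ t := by
        have := Int.floor_le (t/d); rw [← hk] at this
        calc (k:ℝ) * d ≤ (t/d) * d := by nlinarith
        _ = t := by field_simp
      have ht2 : t ≤ ((k:ℝ)+1) * d := by
        have := Int.lt_floor_add_one (t/d); rw [← hk] at this
        have : t/d * d ≤ ((k:ℝ)+1) * d := by push_cast at this ⊢; nlinarith
        calc t = t/d*d := by field_simp
        _ ≤ _ := this
      rw [axis_same_interval h x₀ γ L hL k ⟨hs1, hs2⟩ ⟨ht1, ht2⟩]
      rw [abs_of_nonpos (by linarith)]; linarith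
    | succ N ih =>
      intro s t hst hfl
      set k := ⌊s/d⌋ with hkdef
      set m := ((k:ℝ)+1) * d with hmdef
      have hs1 : (k:ℝ) * d ≤ s := by
        have := Int.floor_le (s/d)
        calc (k:ℝ) * d ≤ (s/d) * d := by nlinarith
        _ = s := by field_simp
      have hs2 : s ≤ m := by
        have := Int.lt_floor_add_one (s/d)
        have : s/d * d ≤ ((k:ℝ)+1) * d := by push_cast at this ⊢; nlinarith
        calc s = s/d*d := by field_simp
        _ ≤ _ := this
      have hmt : m ≤ t := by
        have h1 : (k + 1 : ℤ) ≤ ⌊t/d⌋ := by omega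
        have h2 : ((k:ℝ)+1) ≤ t/d := by
          calc ((k:ℝ)+1) = ((k+1 : ℤ):ℝ) := by push_cast; ring
          _ ≤ (⌊t/d⌋ : ℝ) := by exact_mod_cast h1
          _ ≤ t/d := Int.floor_le _
        calc m = ((k:ℝ)+1)*d := hmdef
        _ ≤ (t/d)*d := by nlinarith
        _ = t := by field_simp
      have hstep : dist (L s) (L m) = m - s := by
        rw [axis_same_interval h x₀ γ L hL k ⟨hs1, hs2⟩ ⟨by nlinarith, le_refl m⟩]
        rw [abs_of_nonpos (by linarith)]; ring
      have hmfloor : ⌊m/d⌋ = k + 1 := by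
        have : m/d = ((k+1:ℤ):ℝ) := by rw [hmdef]; push_cast; field_simp
        rw [this, Int.floor_intCast]
      have hrest : dist (L m) (L t) ≤ t - m := by
        apply ih m t hmt
        rw [hmfloor]; omega
      calc dist (L s) (L t) ≤ dist (L s) (L m) + dist (L m) (L t) := dist_triangle _ _ _
      _ ≤ (m - s) + (t - m) := by rw [hstep]; linarith
      _ = t - s := by ring
  intro s t
  rcases le_total s t with hst | hts
  · have h1 : s/d ≤ t/d := by gcongr
    have hfl : ⌊s/d⌋ ≤ ⌊t/d⌋ := Int.floor_le_floor h1
    have := main (⌊t/d⌋ - ⌊s/d⌋).toNat s t hst (Int.toNat_of_nonneg (by omega)).symm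
    rw [abs_of_nonpos (by linarith)]; linarith
  · have h1 : t/d ≤ s/d := by gcongr
    have hfl : ⌊t/d⌋ ≤ ⌊s/d⌋ := Int.floor_le_floor h1
    have := main (⌊s/d⌋ - ⌊t/d⌋).toNat t s hts (Int.toNat_of_nonneg (by omega)).symm
    rw [dist_comm, abs_of_nonneg (by linarith)]; linarith

end

lemma isoequiv_pow_iterate {X : Type*} [MetricSpace X] (h : X ≃ᵢ X) (k : ℕ) (x : X) :
    (h ^ (k:ℤ)) x = (⇑h)^[k] x := by
  rw [zpow_natCast]
  induction k with
  | zero => simp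
  | succ n ih => rw [pow_succ', Function.iterate_succ_apply']
                 simp only [IsometryEquiv.coe_mul, Function.comp_apply] at *
                 rw [ih]

section
variable {X : Type*} [MetricSpace X] (h : X ≃ᵢ X) (x₀ : X) (γ L : ℝ → X)

lemma axis_pt (hL : IsInvariantAxis h x₀ γ L) (k : ℕ) :
    L ((k:ℝ) * dist x₀ (h x₀)) = (⇑h)^[k] x₀ := by
  have hmem : ((k:ℤ):ℝ) * dist x₀ (h x₀)
      ∈ Set.Icc (((k:ℤ):ℝ) * dist x₀ (h x₀)) ((((k:ℤ):ℝ)+1) * dist x₀ (h x₀)) :=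
    ⟨le_rfl, by nlinarith [dist_nonneg (x := x₀) (y := h x₀)]⟩
  have h2 := hL.2 (k:ℤ) _ hmem
  push_cast at h2
  rw [h2, sub_self, hL.1.1, isoequiv_pow_iterate]

end

section
variable {X : Type*} [MetricSpace X] (L : ℝ → X) (R : ℝ)

lemma rev_stab_ordered (hR : 0 ≤ R)
    (lip : ∀ s t : ℝ, dist (L s) (L t) ≤ |s - t|)
    (hstab : ∀ a b : ℝ, a ≤ b → ∀ σ : ℝ → X, IsGeodesicSegment σ (L a) (L b) →
      ∀ s ∈ Set.Icc a b,
        ∃ q ∈ σ '' Set.Icc (0 : ℝ) (dist (L a) (L b)), dist (L s) q ≤ R)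
    (a b : ℝ) (hab : a ≤ b) (σ : ℝ → X) (hσ : IsGeodesicSegment σ (L a) (L b))
    (t : ℝ) (ht : t ∈ Set.Icc (0:ℝ) (dist (L a) (L b))) :
    ∃ s : ℝ, dist (σ t) (L s) ≤ 3 * R := by
  set D := dist (L a) (L b) with hD
  have hw : ∀ s ∈ Set.Icc a b, ∃ t', t' ∈ Set.Icc (0:ℝ) D ∧ dist (L s) (σ t') ≤ R := by
    intro s hs
    obtain ⟨q, ⟨t', ht', rfl⟩, hq⟩ := hstab a b hab σ hσ s hs
    exact ⟨t', ht', hq⟩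
  choose w hw1 hw2 using hw
  -- key estimate
  have hE : ∀ s (hs : s ∈ Set.Icc a b) s' (hs' : s' ∈ Set.Icc a b),
      |w s hs - w s' hs'| ≤ 2*R + |s - s'| := by
    intro s hs s' hs'
    have h1 : dist (σ (w s hs)) (σ (w s' hs')) = |w s hs - w s' hs'| :=
      hσ.2.2 _ (hw1 s hs) _ (hw1 s' hs')
    have h2 : dist (σ (w s hs)) (σ (w s' hs')) ≤
        dist (σ (w s hs)) (L s) + dist (L s) (L s') + dist (L s') (σ (w s' hs')) :=
      dist_triangle4 _ _ _ _
    have h3 := lip s s'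
    have h4 := hw2 s hs
    have h5 := hw2 s' hs'
    rw [dist_comm (σ (w s hs)) (L s)] at h2
    linarith [h1 ▸ h2]
  have hamem : a ∈ Set.Icc a b := ⟨le_rfl, hab⟩
  have hbmem : b ∈ Set.Icc a b := ⟨hab, le_rfl⟩
  have hwa : w a hamem ≤ R := by
    have h1 : dist (σ (w a hamem)) (σ 0) = |w a hamem - 0| :=
      hσ.2.2 _ (hw1 a hamem) _ ⟨le_rfl, dist_nonneg⟩
    rw [hσ.1, sub_zero, abs_of_nonneg (hw1 a hamem).1] at h1
    have := hw2 a hamem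
    rw [dist_comm] at this
    linarith [h1 ▸ this]
  have hwb : D - R ≤ w b hbmem := by
    have h1 : dist (σ (w b hbmem)) (σ D) = |w b hbmem - D| :=
      hσ.2.2 _ (hw1 b hbmem) _ ⟨dist_nonneg, le_rfl⟩
    rw [hσ.2.1] at h1
    have h2 := hw2 b hbmem
    rw [dist_comm] at h2
    have h3 : |w b hbmem - D| ≤ R := h1 ▸ h2
    have := abs_le.mp h3
    linarith [this.1]
  by_cases hc : t < w a hamem
  · refine ⟨a, ?_⟩
    have h1 : dist (σ t) (σ 0) = |t - 0| := hσ.2.2 _ ht _ ⟨le_rfl, dist_nonneg⟩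
    rw [hσ.1, sub_zero, abs_of_nonneg ht.1] at h1
    linarith [h1]
  · push_neg at hc
    set S := {s : ℝ | ∃ hs : s ∈ Set.Icc a b, w s hs ≤ t} with hS
    have haS : a ∈ S := ⟨hamem, hc⟩
    have hne : S.Nonempty := ⟨a, haS⟩
    have hbdd : BddAbove S := ⟨b, fun s hs => hs.1.2⟩
    set s₀ := sSup S with hs₀
    have has₀ : a ≤ s₀ := le_csSup hbdd haS
    have hs₀b : s₀ ≤ b := csSup_le hne (fun s hs => hs.1.2)
    have hs₀mem : s₀ ∈ Set.Icc a b := ⟨has₀, hs₀b⟩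
    have hup : w s₀ hs₀mem ≤ t + 2*R := by
      apply le_of_forall_pos_le_add
      intro η hηpos
      obtain ⟨s, hsS, hgt⟩ := exists_lt_of_lt_csSup hne (show s₀ - η < s₀ by linarith)
      obtain ⟨hsmem, hswt⟩ := hsS
      have hsle : s ≤ s₀ := le_csSup hbdd ⟨hsmem, hswt⟩
      have hE1 := hE s₀ hs₀mem s hsmem
      have habs : |s₀ - s| ≤ η := by rw [abs_of_nonneg (by linarith)]; linarith
      have h2 := abs_le.mp hE1
      linarith [h2.1]
    have hlo : t ≤ w s₀ hs₀mem + 2*R := by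
      rcases eq_or_lt_of_le hs₀b with heq | hlt
      · -- s₀ = b
        have : D - R ≤ w s₀ hs₀mem := by
          revert hs₀mem
          rw [heq]
          intro hm _
          exact hwb
        linarith [ht.2]
      · have key : ∀ η > 0, t ≤ (w s₀ hs₀mem + 2*R) + η := by
          intro η hηpos
          have hs'gt : s₀ < min (s₀ + η) b := lt_min (by linarith) hlt
          have hs'mem : min (s₀ + η) b ∈ Set.Icc a b := ⟨by linarith, min_le_right _ _⟩
          have hs'notS : min (s₀ + η) b ∉ S :=
            fun hmem => absurd (le_csSup hbdd hmem) (not_le.mpr hs'gt)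
          have hs'w : t < w (min (s₀ + η) b) hs'mem := by
            by_contra hle
            exact hs'notS ⟨hs'mem, not_lt.mp hle⟩
          have hE1 := hE (min (s₀ + η) b) hs'mem s₀ hs₀mem
          have habs : |min (s₀ + η) b - s₀| ≤ η := by
            rw [abs_of_nonneg (by linarith)]
            have : min (s₀ + η) b ≤ s₀ + η := min_le_left _ _
            linarith
          have h2 := abs_le.mp hE1
          linarith [h2.2]
        exact le_of_forall_pos_le_add key
    refine ⟨s₀, ?_⟩
    have h1 : dist (σ t) (σ (w s₀ hs₀mem)) = |t - w s₀ hs₀mem| :=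
      hσ.2.2 _ ht _ (hw1 s₀ hs₀mem)
    have h2 : |t - w s₀ hs₀mem| ≤ 2*R := abs_le.mpr ⟨by linarith, by linarith⟩
    have h3 := hw2 s₀ hs₀mem
    rw [dist_comm] at h3
    calc dist (σ t) (L s₀) ≤ dist (σ t) (σ (w s₀ hs₀mem)) + dist (σ (w s₀ hs₀mem)) (L s₀) :=
          dist_triangle _ _ _
    _ ≤ 2*R + R := by rw [h1]; linarith
    _ = 3*R := by ring

lemma rev_stab (hR : 0 ≤ R)
    (lip : ∀ s t : ℝ, dist (L s) (L t) ≤ |s - t|)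
    (hstab : ∀ a b : ℝ, a ≤ b → ∀ σ : ℝ → X, IsGeodesicSegment σ (L a) (L b) →
      ∀ s ∈ Set.Icc a b,
        ∃ q ∈ σ '' Set.Icc (0 : ℝ) (dist (L a) (L b)), dist (L s) q ≤ R)
    (a b : ℝ) (σ : ℝ → X) (hσ : IsGeodesicSegment σ (L a) (L b))
    (t : ℝ) (ht : t ∈ Set.Icc (0:ℝ) (dist (L a) (L b))) :
    ∃ s : ℝ, dist (σ t) (L s) ≤ 3 * R := by
  rcases le_total a b with hab | hba
  · exact rev_stab_ordered L R hR lip hstab a b hab σ hσ t ht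
  · have hσ' := gs_rev hσ
    have ht' : dist (L a) (L b) - t ∈ Set.Icc (0:ℝ) (dist (L b) (L a)) := by
      rw [dist_comm (L b) (L a)]
      exact ⟨by linarith [ht.2], by linarith [ht.1]⟩
    obtain ⟨s, hs⟩ := rev_stab_ordered L R hR lip hstab b a hba _ hσ' _ ht'
    exact ⟨s, by simpa using hs⟩

end

section
variable {X : Type*} [MetricSpace X]

lemma transition (δ : ℝ) (hhyp : DeltaHyperbolic X δ) (x y z : X)
    (σ₁ σ₂ σ₃ : ℝ → X) (h₁ : IsGeodesicSegment σ₁ x y) (h₂ : IsGeodesicSegment σ₂ y z)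
    (h₃ : IsGeodesicSegment σ₃ x z) :
    ∃ w : X, (∃ a ∈ σ₁ '' Set.Icc (0:ℝ) (dist x y), dist w a ≤ δ) ∧
      (∃ b ∈ σ₂ '' Set.Icc (0:ℝ) (dist y z), dist w b ≤ δ) ∧
      dist x w + dist w z = dist x z := by
  set img1 := σ₁ '' Set.Icc (0:ℝ) (dist x y) with himg1
  set img2 := σ₂ '' Set.Icc (0:ℝ) (dist y z) with himg2
  have hc1 : IsCompact img1 := isCompact_Icc.image_of_continuousOn (gs_cont h₁)
  have hc2 : IsCompact img2 := isCompact_Icc.image_of_continuousOn (gs_cont h₂)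
  have hne1 : img1.Nonempty := ⟨x, ⟨0, ⟨le_rfl, dist_nonneg⟩, h₁.1⟩⟩
  have hne2 : img2.Nonempty := ⟨z, ⟨dist y z, ⟨dist_nonneg, le_rfl⟩, h₂.2.1⟩⟩
  set f : ℝ → ℝ := fun t => Metric.infDist (σ₃ t) img1 - Metric.infDist (σ₃ t) img2
    with hf
  have hfc : ContinuousOn f (Set.Icc (0:ℝ) (dist x z)) := by
    apply ContinuousOn.sub
    · exact (Metric.continuous_infDist_pt img1).comp_continuousOn (gs_cont h₃)
    · exact (Metric.continuous_infDist_pt img2).comp_continuousOn (gs_cont h₃)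
  have hf0 : f 0 ≤ 0 := by
    have hx1 : Metric.infDist (σ₃ 0) img1 = 0 := by
      rw [h₃.1]
      exact Metric.infDist_zero_of_mem ⟨0, ⟨le_rfl, dist_nonneg⟩, h₁.1⟩
    have hx2 : 0 ≤ Metric.infDist (σ₃ 0) img2 := Metric.infDist_nonneg
    simp only [hf]; linarith
  have hfD : 0 ≤ f (dist x z) := by
    have hz2 : Metric.infDist (σ₃ (dist x z)) img2 = 0 := by
      rw [h₃.2.1]
      exact Metric.infDist_zero_of_mem ⟨dist y z, ⟨dist_nonneg, le_rfl⟩, h₂.2.1⟩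
    have hz1 : 0 ≤ Metric.infDist (σ₃ (dist x z)) img1 := Metric.infDist_nonneg
    simp only [hf]; linarith
  have hmem : (0:ℝ) ∈ Set.Icc (f 0) (f (dist x z)) := ⟨hf0, hfD⟩
  obtain ⟨t₀, ht₀, hft₀⟩ := intermediate_value_Icc dist_nonneg hfc hmem
  obtain ⟨q, hq, hdq⟩ := hhyp x y z σ₁ σ₂ σ₃ h₁ h₂ h₃ (σ₃ t₀) ⟨t₀, ht₀, rfl⟩
  have hi1 : Metric.infDist (σ₃ t₀) img1 ≤ δ := by
    rcases hq with hq1 | hq2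
    · exact le_trans (Metric.infDist_le_dist_of_mem hq1) hdq
    · have := le_trans (Metric.infDist_le_dist_of_mem hq2) hdq
      have heq : Metric.infDist (σ₃ t₀) img1 = Metric.infDist (σ₃ t₀) img2 := by
        have := hft₀; simp only [hf] at this; linarith
      linarith
  have hi2 : Metric.infDist (σ₃ t₀) img2 ≤ δ := by
    have heq : Metric.infDist (σ₃ t₀) img1 = Metric.infDist (σ₃ t₀) img2 := by
      have := hft₀; simp only [hf] at this; linarith
    linarith
  obtain ⟨a, ha, hda⟩ := hc1.exists_infDist_eq_dist hne1 (σ₃ t₀)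
  obtain ⟨b, hb, hdb⟩ := hc2.exists_infDist_eq_dist hne2 (σ₃ t₀)
  refine ⟨σ₃ t₀, ⟨a, ha, by rw [← hda]; exact hi1⟩, ⟨b, hb, by rw [← hdb]; exact hi2⟩, ?_⟩
  have e1 : dist x (σ₃ t₀) = t₀ := by
    have h := h₃.2.2 0 ⟨le_rfl, dist_nonneg⟩ t₀ ht₀
    rw [h₃.1, abs_of_nonpos (by linarith [ht₀.1])] at h
    rw [h]; ring
  have e2 : dist (σ₃ t₀) z = dist x z - t₀ := by
    have h := h₃.2.2 t₀ ht₀ (dist x z) ⟨dist_nonneg, le_rfl⟩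
    rw [h₃.2.1, abs_of_nonpos (by linarith [ht₀.2])] at h
    rw [h]; ring
  rw [e1, e2]; ring

lemma proj_est (δ R ε : ℝ)
    (hgeo : GeodesicSpace X) (hhyp : DeltaHyperbolic X δ)
    (L : ℝ → X)
    (hrev : ∀ a b : ℝ, ∀ σ : ℝ → X, IsGeodesicSegment σ (L a) (L b) →
      ∀ t ∈ Set.Icc (0:ℝ) (dist (L a) (L b)), ∃ s : ℝ, dist (σ t) (L s) ≤ 3 * R)
    (y : X) (sp su : ℝ)
    (hproj : dist y (L sp) ≤ Metric.infDist y (Set.range L) + ε) :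
    dist y (L sp) + dist (L sp) (L su) - (2*ε + 6*R + 4*δ) ≤ dist y (L su) := by
  obtain ⟨σ₁, hσ₁⟩ := hgeo y (L sp)
  obtain ⟨σ₂, hσ₂⟩ := hgeo (L sp) (L su)
  obtain ⟨σ₃, hσ₃⟩ := hgeo y (L su)
  obtain ⟨w, ⟨a, ⟨ta, hta, rfl⟩, hwa⟩, ⟨b, ⟨tb, htb, rfl⟩, hwb⟩, hsum⟩ :=
    transition δ hhyp y (L sp) (L su) σ₁ σ₂ σ₃ hσ₁ hσ₂ hσ₃
  obtain ⟨s', hbs'⟩ := hrev sp su σ₂ hσ₂ tb htb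
  -- distance from y to b
  have h1 : Metric.infDist y (Set.range L) ≤ dist y (L s') :=
    Metric.infDist_le_dist_of_mem ⟨s', rfl⟩
  have h2 : dist y (L s') ≤ dist y (σ₂ tb) + dist (σ₂ tb) (L s') := dist_triangle _ _ _
  have hyb : dist y (L sp) - ε - 3*R ≤ dist y (σ₂ tb) := by linarith
  have hyw : dist y (L sp) - ε - 3*R - δ ≤ dist y w := by
    have := dist_triangle y w (σ₂ tb)
    linarith
  -- a on [y, L sp]
  have hya : dist y (σ₁ ta) = ta := by
    have h := hσ₁.2.2 0 ⟨le_rfl, dist_nonneg⟩ ta hta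
    rw [hσ₁.1, abs_of_nonpos (by linarith [hta.1])] at h
    rw [h]; ring
  have hap : dist (σ₁ ta) (L sp) = dist y (L sp) - ta := by
    have h := hσ₁.2.2 ta hta (dist y (L sp)) ⟨dist_nonneg, le_rfl⟩
    rw [hσ₁.2.1, abs_of_nonpos (by linarith [hta.2])] at h
    rw [h]; ring
  have hyage : dist y w - δ ≤ dist y (σ₁ ta) := by
    have t1 := dist_triangle y (σ₁ ta) w
    have t2 : dist (σ₁ ta) w = dist w (σ₁ ta) := dist_comm _ _
    linarith
  have haple : dist (σ₁ ta) (L sp) ≤ ε + 3*R + 2*δ := by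
    rw [hap]; rw [hya] at hyage; linarith
  have hwu : dist (L sp) (L su) - ε - 3*R - 3*δ ≤ dist w (L su) := by
    have t1 : dist (L sp) (L su) ≤ dist (L sp) (σ₁ ta) + dist (σ₁ ta) (L su) :=
      dist_triangle _ _ _
    have t2 : dist (σ₁ ta) (L su) ≤ dist (σ₁ ta) w + dist w (L su) := dist_triangle _ _ _
    have t3 : dist (σ₁ ta) w = dist w (σ₁ ta) := dist_comm _ _
    have t4 : dist (L sp) (σ₁ ta) = dist (σ₁ ta) (L sp) := dist_comm _ _
    linarith
  linarith
end

/-- **Lemma 8.2**: relation between projection to the invariant axis `L₁` and the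
Gromov product.  Here `R` is a stability constant for the quasi-geodesic `L₁`. -/
theorem gromov_product_projection {X : Type*} [MetricSpace X]
    (δ : ℝ) (hδ : 0 ≤ δ)
    (hgeo : GeodesicSpace X) (hhyp : DeltaHyperbolic X δ)
    (h : X ≃ᵢ X) (x₀ : X) (hα : 0 < avgDisp h x₀)
    (γ L : ℝ → X) (hL : IsInvariantAxis h x₀ γ L)
    (R : ℝ)
    (hstab : ∀ a b : ℝ, a ≤ b → ∀ σ : ℝ → X, IsGeodesicSegment σ (L a) (L b) →
      ∀ s ∈ Set.Icc a b,
        ∃ q ∈ σ '' Set.Icc (0 : ℝ) (dist (L a) (L b)), dist (L s) q ≤ R)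
    (ε : ℝ) (hε : dist x₀ (h x₀) < ε) :
    ∃ K : ℝ, ∀ (y z : X) (m n : ℕ), 0 < m → 0 < n →
      (⇑h)^[m] x₀ ∈ quasiProj (Set.range L) ε y →
      (⇑h)^[n] x₀ ∈ quasiProj (Set.range L) ε z →
      min (dist x₀ ((⇑h)^[n] x₀)) (dist x₀ ((⇑h)^[m] x₀)) - K ≤ gromovProd x₀ y z ∧
        |gromovProd x₀ y ((⇑h)^[n] x₀) -
            min (dist x₀ ((⇑h)^[n] x₀)) (dist x₀ ((⇑h)^[m] x₀))| ≤ K := by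
  have hd : 0 < dist x₀ (h x₀) := by
    have hbdd : BddBelow (Set.range fun n : ℕ+ => dist x₀ ((⇑h)^[(n:ℕ)] x₀) / (n:ℝ)) := by
      refine ⟨0, ?_⟩
      rintro r ⟨n, rfl⟩
      positivity
    have h1 : avgDisp h x₀ ≤ dist x₀ ((⇑h)^[((1:ℕ+):ℕ)] x₀) / ((1:ℕ+):ℝ) := ciInf_le hbdd 1
    simp only [PNat.one_coe, Function.iterate_one, Nat.cast_one, div_one] at h1
    exact lt_of_lt_of_le hα h1
  have hε0 : 0 < ε := lt_trans hd hε
  have lip := axis_lipschitz h x₀ γ L hL hd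
  have hR : 0 ≤ R := by
    obtain ⟨σ, hσ⟩ := hgeo (L 0) (L 0)
    obtain ⟨q, ⟨t, ht, rfl⟩, hq⟩ := hstab 0 0 le_rfl σ hσ 0 ⟨le_rfl, le_rfl⟩
    have ht0 : t = 0 := le_antisymm (by simpa using ht.2) ht.1
    rw [ht0, hσ.1, dist_self] at hq
    exact hq
  have hrev : ∀ a b : ℝ, ∀ σ : ℝ → X, IsGeodesicSegment σ (L a) (L b) →
      ∀ t ∈ Set.Icc (0:ℝ) (dist (L a) (L b)), ∃ s : ℝ, dist (σ t) (L s) ≤ 3 * R :=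
    fun a b σ hσ t ht => rev_stab L R hR lip hstab a b σ hσ t ht
  have hpt : ∀ k : ℕ, L ((k:ℝ) * dist x₀ (h x₀)) = (⇑h)^[k] x₀ := axis_pt h x₀ γ L hL
  have hx0 : L 0 = x₀ := by
    have := hpt 0
    simpa using this
  have key : ∀ i j : ℕ, (i:ℝ) ≤ (j:ℝ) →
      dist x₀ ((⇑h)^[i] x₀) + dist ((⇑h)^[i] x₀) ((⇑h)^[j] x₀) - 2*R
        ≤ dist x₀ ((⇑h)^[j] x₀) := by
    intro i j hij
    obtain ⟨σ, hσ⟩ := hgeo (L 0) (L ((j:ℝ) * dist x₀ (h x₀)))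
    have him : (i:ℝ) * dist x₀ (h x₀) ∈ Set.Icc (0:ℝ) ((j:ℝ) * dist x₀ (h x₀)) :=
      ⟨by positivity, by nlinarith⟩
    obtain ⟨q, ⟨t, ht, rfl⟩, hq⟩ :=
      hstab 0 ((j:ℝ) * dist x₀ (h x₀)) (by positivity) σ hσ ((i:ℝ) * dist x₀ (h x₀)) him
    have e1 : dist (L 0) (σ t) = t := by
      have hh := hσ.2.2 0 ⟨le_rfl, dist_nonneg⟩ t ht
      rw [hσ.1, abs_of_nonpos (by linarith [ht.1])] at hh
      rw [hh]; ring
    have e2 : dist (σ t) (L ((j:ℝ) * dist x₀ (h x₀)))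
        = dist (L 0) (L ((j:ℝ) * dist x₀ (h x₀))) - t := by
      have hh := hσ.2.2 t ht _ ⟨dist_nonneg, le_rfl⟩
      rw [hσ.2.1, abs_of_nonpos (by linarith [ht.2])] at hh
      rw [hh]; ring
    have t1 : dist (L 0) (L ((i:ℝ) * dist x₀ (h x₀))) ≤ dist (L 0) (σ t)
        + dist (σ t) (L ((i:ℝ) * dist x₀ (h x₀))) := dist_triangle _ _ _
    have t2 : dist (L ((i:ℝ) * dist x₀ (h x₀))) (L ((j:ℝ) * dist x₀ (h x₀)))
        ≤ dist (L ((i:ℝ) * dist x₀ (h x₀))) (σ t)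
          + dist (σ t) (L ((j:ℝ) * dist x₀ (h x₀))) := dist_triangle _ _ _
    have t3 : dist (σ t) (L ((i:ℝ) * dist x₀ (h x₀)))
        = dist (L ((i:ℝ) * dist x₀ (h x₀))) (σ t) := dist_comm _ _
    rw [hpt i, hpt j, hx0] at *
    linarith
  refine ⟨2*ε + 7*R + 4*δ, ?_⟩
  have main1 : ∀ (y z : X) (m n : ℕ), 0 < m → 0 < n →
      (⇑h)^[m] x₀ ∈ quasiProj (Set.range L) ε y →
      (⇑h)^[n] x₀ ∈ quasiProj (Set.range L) ε z →
      min (dist x₀ ((⇑h)^[n] x₀)) (dist x₀ ((⇑h)^[m] x₀)) - (2*ε + 7*R + 4*δ)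
        ≤ gromovProd x₀ y z := by
    intro y z m n hm hn hy hz
    have A1 := proj_est δ R ε hgeo hhyp L hrev y ((m:ℝ) * dist x₀ (h x₀)) 0
      (by rw [hpt m]; exact hy.2)
    have A2 := proj_est δ R ε hgeo hhyp L hrev z ((n:ℝ) * dist x₀ (h x₀)) 0
      (by rw [hpt n]; exact hz.2)
    rw [hpt m, hx0] at A1
    rw [hpt n, hx0] at A2
    have A3 : dist y z ≤ dist y ((⇑h)^[m] x₀) + dist ((⇑h)^[m] x₀) ((⇑h)^[n] x₀)
        + dist ((⇑h)^[n] x₀) z := dist_triangle4 _ _ _ _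
    have c1 : dist x₀ y = dist y x₀ := dist_comm _ _
    have c2 : dist x₀ z = dist z x₀ := dist_comm _ _
    have c3 : dist x₀ ((⇑h)^[m] x₀) = dist ((⇑h)^[m] x₀) x₀ := dist_comm _ _
    have c4 : dist x₀ ((⇑h)^[n] x₀) = dist ((⇑h)^[n] x₀) x₀ := dist_comm _ _
    have c5 : dist ((⇑h)^[n] x₀) z = dist z ((⇑h)^[n] x₀) := dist_comm _ _
    simp only [gromovProd]
    rcases le_total (m:ℕ) (n:ℕ) with hmn | hnm
    · have B := key m n (Nat.cast_le.mpr hmn)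
      have hminle : min (dist x₀ ((⇑h)^[n] x₀)) (dist x₀ ((⇑h)^[m] x₀))
          ≤ dist x₀ ((⇑h)^[m] x₀) := min_le_right _ _
      linarith
    · have B := key n m (Nat.cast_le.mpr hnm)
      have hminle : min (dist x₀ ((⇑h)^[n] x₀)) (dist x₀ ((⇑h)^[m] x₀))
          ≤ dist x₀ ((⇑h)^[n] x₀) := min_le_left _ _
      have c6 : dist ((⇑h)^[m] x₀) ((⇑h)^[n] x₀)
          = dist ((⇑h)^[n] x₀) ((⇑h)^[m] x₀) := dist_comm _ _
      linarith
  intro y z m n hm hn hy hz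
  refine ⟨main1 y z m n hm hn hy hz, ?_⟩
  have hq : (⇑h)^[n] x₀ ∈ quasiProj (Set.range L) ε ((⇑h)^[n] x₀) := by
    refine ⟨⟨(n:ℝ) * dist x₀ (h x₀), hpt n⟩, ?_⟩
    rw [dist_self]
    have := Metric.infDist_nonneg (s := Set.range L) (x := (⇑h)^[n] x₀)
    linarith
  have lower := main1 y ((⇑h)^[n] x₀) m n hm hn hy hq
  have upper : gromovProd x₀ y ((⇑h)^[n] x₀)
      ≤ min (dist x₀ ((⇑h)^[n] x₀)) (dist x₀ ((⇑h)^[m] x₀)) + (2*ε + 7*R + 4*δ) := by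
    have sub1 : gromovProd x₀ y ((⇑h)^[n] x₀) ≤ dist x₀ ((⇑h)^[n] x₀) := by
      simp only [gromovProd]
      have t1 := dist_triangle x₀ ((⇑h)^[n] x₀) y
      have c1 : dist ((⇑h)^[n] x₀) y = dist y ((⇑h)^[n] x₀) := dist_comm _ _
      linarith
    have A5 := proj_est δ R ε hgeo hhyp L hrev y ((m:ℝ) * dist x₀ (h x₀))
      ((n:ℝ) * dist x₀ (h x₀)) (by rw [hpt m]; exact hy.2)
    rw [hpt m, hpt n] at A5
    have sub2 : gromovProd x₀ y ((⇑h)^[n] x₀)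
        ≤ dist x₀ ((⇑h)^[m] x₀) + (2*ε + 6*R + 4*δ)/2 := by
      simp only [gromovProd]
      have t1 := dist_triangle x₀ ((⇑h)^[m] x₀) y
      have t2 := dist_triangle x₀ ((⇑h)^[m] x₀) ((⇑h)^[n] x₀)
      have c1 : dist ((⇑h)^[m] x₀) y = dist y ((⇑h)^[m] x₀) := dist_comm _ _
      linarith
    rcases le_total (dist x₀ ((⇑h)^[n] x₀)) (dist x₀ ((⇑h)^[m] x₀)) with hc | hc
    · have hmeq : min (dist x₀ ((⇑h)^[n] x₀)) (dist x₀ ((⇑h)^[m] x₀))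
          = dist x₀ ((⇑h)^[n] x₀) := min_eq_left hc
      linarith
    · have hmeq : min (dist x₀ ((⇑h)^[n] x₀)) (dist x₀ ((⇑h)^[m] x₀))
          = dist x₀ ((⇑h)^[m] x₀) := min_eq_right hc
      linarith
  exact abs_le.mpr ⟨by linarith, by linarith⟩
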